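/- arXiv:1411.4648 — 2 statements merged into one kernel-verified Lean document; each statement's English description precedes it below -/
import Mathlib

section
/- In the CHSH scenario (binary inputs x,y and binary outputs a,b), every nonsignalling conditional distribution p(a,b|x,y) with CHSH ≤ 0 for all eight symmetry-relabelings of the CHSH expression admits a causal model with direct influence X→B of zero causal strength, i.e. is reproducible by a local hidden variable model. Equivalently, min C_{X→B} = 0 whenever max over symmetries of CHSH is ≤ 0. -/
/-!
Fine's theorem. A nonsignalling box is determined by `m x = p_A(0|x)`, `n y = p_B(0|y)` and
`c x y = p(0,0|x,y)`, and it is local as soon as the four outcomes `A₀, A₁, B₀, B₁` admit a joint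
law with the observed pair marginals. For each `x` we build a law `T x` of `(A_x, B₀, B₁)` with
the right `(A_x, B_y)`-marginals and a common `(B₀, B₁)`-marginal `V`, and glue `T 0` and `T 1`
by making `A₀` and `A₁` conditionally independent given `(B₀, B₁)`. The laws `T x` are
parametrised by `v = P(B₀ = 0, B₁ = 0)` and `s = P(A_x = 0, B₀ = 0, B₁ = 0)`; eliminating `s`
confines `v` to an interval for each `x`, and the two intervals intersect when the box is
nonnegative and satisfies the eight CHSH inequalities.
-/

/-- The CHSH quantity `p(00|00) + p(00|01) + p(00|10) − p(00|11) − p_A(0|0) − p_B(0|0)`. -/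
def CHSHval (p : Fin 2 → Fin 2 → Fin 2 → Fin 2 → ℝ) : ℝ :=
  p 0 0 0 0 + p 0 0 0 1 + p 0 0 1 0 - p 0 0 1 1
    - (p 0 0 0 0 + p 0 1 0 0) - (p 0 0 0 0 + p 1 0 0 0)

/-- Relabeling of inputs (`πx, πy`), outputs (`πa, πb`, possibly input-dependent) and
exchange of the two parties (`swap`), acting on conditional distributions `p(a,b|x,y)`. -/
def relabel (πx πy : Equiv.Perm (Fin 2)) (πa πb : Fin 2 → Equiv.Perm (Fin 2))
    (swap : Bool) (p : Fin 2 → Fin 2 → Fin 2 → Fin 2 → ℝ) :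
    Fin 2 → Fin 2 → Fin 2 → Fin 2 → ℝ :=
  fun a b x y =>
    if swap then p (πb y b) (πa x a) (πy y) (πx x)
    else p (πa x a) (πb y b) (πx x) (πy y)

open Finset

theorem sum_pi_ite_eq_mul_pow {X A R : Type*} [Fintype X] [DecidableEq X] [Fintype A]
    [DecidableEq A] [CommSemiring R] (T : X → A → R) {V : R} (hT : ∀ x, ∑ a, T x a = V)
    (x : X) (a : A) :
    ∑ α : X → A, (if a = α x then ∏ x', T x' (α x') else 0) =
      T x a * V ^ (Fintype.card X - 1) := by
  let f : X → A → R := fun x' a' => if x' = x ∧ a' ≠ a then 0 else T x' a'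
  have hf : ∀ α : X → A, (if a = α x then ∏ x', T x' (α x') else 0) = ∏ x', f x' (α x') := by
    intro α
    split_ifs with h
    · exact prod_congr rfl fun x' _ => (if_neg (by rintro ⟨rfl, hne⟩; exact hne h.symm)).symm
    · exact (prod_eq_zero (mem_univ x) (by simp [f, Ne.symm h])).symm
  have hf_self : ∑ a', f x a' = T x a := by simp [f]
  have hf_ne : ∀ x' ∈ univ.erase x, ∑ a', f x' a' = V := fun x' hx' => by
    simp [f, ne_of_mem_erase hx', hT]
  simp_rw [hf, ← Fintype.prod_sum, ← mul_prod_erase univ _ (mem_univ x), hf_self,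
    prod_congr rfl hf_ne, prod_const, card_erase_of_mem (mem_univ x), card_univ]

section LocalModel

variable {A B X Y : Type*} [DecidableEq A] [DecidableEq B]

def HasLHVModel (p : A → B → X → Y → ℝ) : Prop :=
  ∃ (k : ℕ) (q : Fin k → ℝ) (fA : X → Fin k → A) (fB : Y → Fin k → B),
    (∀ l, 0 ≤ q l) ∧ (∑ l, q l = 1) ∧
    ∀ a b x y, p a b x y =
      ∑ l, q l * (if a = fA x l then (1:ℝ) else 0) * (if b = fB y l then (1:ℝ) else 0)

variable [Fintype A] [Fintype B]

theorem HasLHVModel.of_fintype {Λ : Type*} [Fintype Λ] {p : A → B → X → Y → ℝ} (q : Λ → ℝ)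
    (fA : X → Λ → A) (fB : Y → Λ → B) (hq : ∀ l, 0 ≤ q l)
    (hp : ∀ a b x y, p a b x y =
      ∑ l, q l * (if a = fA x l then (1:ℝ) else 0) * (if b = fB y l then (1:ℝ) else 0))
    {x₀ : X} {y₀ : Y} (hnorm : ∑ a, ∑ b, p a b x₀ y₀ = 1) : HasLHVModel p := by
  have hq_sum : ∑ l, q l = 1 :=
    calc ∑ l, q l = ∑ l, ∑ a, ∑ b,
          q l * (if a = fA x₀ l then (1:ℝ) else 0) * (if b = fB y₀ l then (1:ℝ) else 0) := by
          simp [mul_ite]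
      _ = ∑ a, ∑ b, p a b x₀ y₀ := by
          simp only [hp]
          rw [sum_comm]
          exact sum_congr rfl fun _ _ => sum_comm
      _ = 1 := hnorm
  let e := (Fintype.equivFin Λ).symm
  refine ⟨Fintype.card Λ, q ∘ e, fun x => fA x ∘ e, fun y => fB y ∘ e, fun l => hq _, ?_, ?_⟩
  · rw [← hq_sum]
    exact e.sum_comp q
  · intro a b x y
    rw [hp]
    exact (e.sum_comp fun l =>
      q l * (if a = fA x l then (1:ℝ) else 0) * (if b = fB y l then (1:ℝ) else 0)).symm

theorem HasLHVModel.of_common_marginal [Fintype X] [DecidableEq X] [Fintype Y] [DecidableEq Y]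
    {p : A → B → X → Y → ℝ} (T : X → A → (Y → B) → ℝ) (V : (Y → B) → ℝ)
    (hT : ∀ x a β, 0 ≤ T x a β) (hV : ∀ x β, ∑ a, T x a β = V β)
    (hp : ∀ a b x y, p a b x y = ∑ β : Y → B, if b = β y then T x a β else 0)
    {x₀ : X} {y₀ : Y} (hnorm : ∑ a, ∑ b, p a b x₀ y₀ = 1) : HasLHVModel p := by
  -- makes the `A_x` conditionally independent given `β`
  let q : (X → A) × (Y → B) → ℝ := fun ω =>
    (∏ x, T x (ω.1 x) ω.2) / V ω.2 ^ (Fintype.card X - 1)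
  have hq_marg : ∀ x a β, ∑ α, (if a = α x then q (α, β) else 0) = T x a β := by
    intro x a β
    calc ∑ α, (if a = α x then q (α, β) else 0)
        = (∑ α : X → A, if a = α x then ∏ x', T x' (α x') β else 0) /
            V β ^ (Fintype.card X - 1) := by
          rw [sum_div]
          exact sum_congr rfl fun α _ => by split_ifs <;> simp [q]
      _ = T x a β * V β ^ (Fintype.card X - 1) / V β ^ (Fintype.card X - 1) := by
          rw [sum_pi_ite_eq_mul_pow (fun x a => T x a β) (hV · β)]
      _ = T x a β := by
          by_cases hβ : V β = 0
          · have hTβ : T x a β = 0 :=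
              (sum_eq_zero_iff_of_nonneg fun a _ => hT x a β).1 (hV x β ▸ hβ) a (mem_univ a)
            rw [hTβ, zero_mul, zero_div]
          · exact mul_div_cancel_right₀ _ (pow_ne_zero _ hβ)
  have hV_nonneg : ∀ β, 0 ≤ V β := fun β => hV x₀ β ▸ sum_nonneg fun a _ => hT x₀ a β
  refine HasLHVModel.of_fintype q (fun x ω => ω.1 x) (fun y ω => ω.2 y)
    (fun ω => div_nonneg (prod_nonneg fun x _ => hT x _ _) (pow_nonneg (hV_nonneg _) _)) ?_ hnorm
  intro a b x y
  rw [hp, Fintype.sum_prod_type, sum_comm]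
  refine sum_congr rfl fun β _ => ?_
  rw [← hq_marg x a β]
  split_ifs <;> simp [mul_ite]

end LocalModel

/-- The nonsignalling box with `p_A(0|x) = m x`, `p_B(0|y) = n y` and `p(0,0|x,y) = c x y`. -/
def nsBox (m n : Fin 2 → ℝ) (c : Fin 2 → Fin 2 → ℝ) : Fin 2 → Fin 2 → Fin 2 → Fin 2 → ℝ :=
  fun a b x y =>
    if a = 0 then (if b = 0 then c x y else m x - c x y)
    else (if b = 0 then n y - c x y else 1 - m x - n y + c x y)

theorem eq_nsBox {p : Fin 2 → Fin 2 → Fin 2 → Fin 2 → ℝ}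
    (hnorm : ∀ x y, ∑ a, ∑ b, p a b x y = 1)
    (hnsA : ∀ a x y y', ∑ b, p a b x y = ∑ b, p a b x y')
    (hnsB : ∀ b y x x', ∑ a, p a b x y = ∑ a, p a b x' y) :
    p = nsBox (fun x => ∑ b, p 0 b x 0) (fun y => ∑ a, p a 0 0 y) (p 0 0) := by
  funext a b x y
  have hA := hnsA 0 x 0 y
  have hB := hnsB 0 y 0 x
  have hN := hnorm x y
  simp only [Fin.sum_univ_two] at hA hB hN
  fin_cases a <;> fin_cases b <;>
    simp only [nsBox, Fin.sum_univ_two, Fin.zero_eta, Fin.mk_one, Fin.isValue, one_ne_zero,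
      ↓reduceIte] <;> linarith

theorem nsBox_nonneg_iff {m n : Fin 2 → ℝ} {c : Fin 2 → Fin 2 → ℝ} {x y : Fin 2} :
    (∀ a b, 0 ≤ nsBox m n c a b x y) ↔
      0 ≤ c x y ∧ c x y ≤ m x ∧ c x y ≤ n y ∧ m x + n y ≤ 1 + c x y := by
  have h : 0 ≤ 1 - m x - n y + c x y ↔ m x + n y ≤ 1 + c x y := by
    constructor <;> intro <;> linarith
  simp [Fin.forall_fin_two, nsBox, and_assoc, h]

/-- The law of `(A_x, B₀, B₁)` with `P(A_x = 0, B₀ = 0, B₁ = 0) = s`, `P(B₀ = 0, B₁ = 0) = v` and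
`(A_x, B_y)`-marginals those of `nsBox` at input `x` (where `m = m x`, `c = c x`); these
constraints force every entry. -/
def tripleCell (m : ℝ) (n c : Fin 2 → ℝ) (v s : ℝ) : Fin 2 → Fin 2 → Fin 2 → ℝ :=
  fun a b₀ b₁ =>
    if a = 0 then
      if b₀ = 0 then (if b₁ = 0 then s else c 0 - s)
      else (if b₁ = 0 then c 1 - s else m - c 0 - c 1 + s)
    else
      if b₀ = 0 then (if b₁ = 0 then v - s else n 0 - v - c 0 + s)
      else (if b₁ = 0 then n 1 - v - c 1 + s else 1 - n 0 - n 1 + v - m + c 0 + c 1 - s)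

theorem sum_fin_two_arrow {M α : Type*} [AddCommMonoid M] [Fintype α]
    (f : (Fin 2 → α) → M) :
    ∑ β, f β = ∑ b₀, ∑ b₁, f ![b₀, b₁] := by
  rw [← (finTwoArrowEquiv α).symm.sum_comp, Fintype.sum_prod_type]
  rfl

theorem sum_tripleCell_fst_eq (m m' : ℝ) (n c c' : Fin 2 → ℝ) (v s s' : ℝ) (b₀ b₁ : Fin 2) :
    ∑ a, tripleCell m n c v s a b₀ b₁ = ∑ a, tripleCell m' n c' v s' a b₀ b₁ := by
  fin_cases b₀ <;> fin_cases b₁ <;> simp [Fin.sum_univ_two, tripleCell]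

theorem nsBox_eq_sum_tripleCell (m n : Fin 2 → ℝ) (c : Fin 2 → Fin 2 → ℝ) (v s : ℝ)
    (a b x y : Fin 2) :
    nsBox m n c a b x y =
      ∑ β : Fin 2 → Fin 2, if b = β y then tripleCell (m x) n (c x) v s a (β 0) (β 1) else 0 := by
  rw [sum_fin_two_arrow]
  fin_cases a <;> fin_cases b <;> fin_cases y <;>
    simp only [nsBox, tripleCell, Fin.sum_univ_two, Fin.zero_eta, Fin.mk_one, Fin.isValue,
      one_ne_zero, ↓reduceIte, Matrix.cons_val_zero, Matrix.cons_val_one, Matrix.cons_val_fin_one,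
      sum_ite_eq, sum_ite_irrel, sum_const_zero, mem_univ] <;> ring

/-- With `couplingUpper`: the bounds on `v` left after eliminating `s` from the nonnegativity of
`tripleCell m n c v s`. -/
def couplingLower (m : ℝ) (n c : Fin 2 → ℝ) : Set ℝ :=
  {0, n 0 + n 1 - 1, c 0 + c 1 - m, n 0 + n 1 - 1 + m - c 0 - c 1}

def couplingUpper (n c : Fin 2 → ℝ) : Set ℝ :=
  {n 0, n 1, n 0 + c 1 - c 0, n 1 + c 0 - c 1}

theorem exists_tripleCell_nonneg {m n : Fin 2 → ℝ} {c : Fin 2 → Fin 2 → ℝ} {v : ℝ} (x : Fin 2)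
    (hbox : ∀ a b y, 0 ≤ nsBox m n c a b x y)
    (hlo : ∀ w ∈ couplingLower (m x) n (c x), w ≤ v)
    (hup : ∀ w ∈ couplingUpper n (c x), v ≤ w) :
    ∃ s, ∀ a b₀ b₁, 0 ≤ tripleCell (m x) n (c x) v s a b₀ b₁ := by
  obtain ⟨h₁, h₂, h₃, h₄⟩ := nsBox_nonneg_iff.1 (hbox · · 0)
  obtain ⟨h₅, h₆, h₇, h₈⟩ := nsBox_nonneg_iff.1 (hbox · · 1)
  simp only [couplingLower, couplingUpper, Set.mem_insert_iff, Set.mem_singleton_iff,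
    forall_eq_or_imp, forall_eq] at hlo hup
  obtain ⟨hlo₁, hlo₂, hlo₃, hlo₄⟩ := hlo
  obtain ⟨hup₁, hup₂, hup₃, hup₄⟩ := hup
  obtain ⟨s, hs_lo, hs_up⟩ := exists_between_of_forall_le
    (s := {0, c x 0 + c x 1 - m x, c x 0 - n 0 + v, c x 1 - n 1 + v})
    (t := {c x 0, c x 1, v, 1 - n 0 - n 1 + v - m x + c x 0 + c x 1})
    (Set.insert_nonempty _ _) (Set.insert_nonempty _ _) (by
      simp only [Set.mem_insert_iff, Set.mem_singleton_iff, forall_eq_or_imp, forall_eq]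
      and_intros <;> linarith)
  simp only [mem_upperBounds, mem_lowerBounds, Set.mem_insert_iff, Set.mem_singleton_iff,
    forall_eq_or_imp, forall_eq] at hs_lo hs_up
  obtain ⟨hs₁, hs₂, hs₃, hs₄⟩ := hs_lo
  obtain ⟨hs₅, hs₆, hs₇, hs₈⟩ := hs_up
  refine ⟨s, fun a b₀ b₁ => ?_⟩
  fin_cases a <;> fin_cases b₀ <;> fin_cases b₁ <;>
    simp only [tripleCell, Fin.zero_eta, Fin.mk_one, Fin.isValue, one_ne_zero, ↓reduceIte] <;>
    linarith

theorem couplingLower_le_couplingUpper {m n : Fin 2 → ℝ} {c : Fin 2 → Fin 2 → ℝ}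
    (hpos : ∀ a b x y, 0 ≤ nsBox m n c a b x y)
    (hchsh : ∀ (πx πy : Equiv.Perm (Fin 2)) (πa πb : Fin 2 → Equiv.Perm (Fin 2)) (swap : Bool),
      CHSHval (relabel πx πy πa πb swap (nsBox m n c)) ≤ 0) :
    ∀ w ∈ ⋃ x, couplingLower (m x) n (c x), ∀ w' ∈ ⋃ x, couplingUpper n (c x), w ≤ w' := by
  -- flipping `x`, `y` and `a` already yields all eight CHSH inequalities
  have chsh := fun i j k : Fin 2 =>
    hchsh (![1, Equiv.swap 0 1] i) (![1, Equiv.swap 0 1] j) (fun _ => ![1, Equiv.swap 0 1] k)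
      (fun _ => 1) false
  simp only [Fin.forall_fin_two] at chsh
  simp only [CHSHval, relabel, nsBox, Bool.false_eq_true, ↓reduceIte, Fin.isValue,
    Matrix.cons_val_zero, Matrix.cons_val_one, Matrix.cons_val_fin_one, Equiv.Perm.coe_one, id_eq,
    one_ne_zero, Equiv.swap_apply_left, Equiv.swap_apply_right] at chsh
  obtain ⟨⟨⟨c₁, c₂⟩, c₃, c₄⟩, ⟨c₅, c₆⟩, c₇, c₈⟩ := chsh
  obtain ⟨h00₁, h00₂, h00₃, h00₄⟩ := nsBox_nonneg_iff.1 (hpos · · 0 0)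
  obtain ⟨h01₁, h01₂, h01₃, h01₄⟩ := nsBox_nonneg_iff.1 (hpos · · 0 1)
  obtain ⟨h10₁, h10₂, h10₃, h10₄⟩ := nsBox_nonneg_iff.1 (hpos · · 1 0)
  obtain ⟨h11₁, h11₂, h11₃, h11₄⟩ := nsBox_nonneg_iff.1 (hpos · · 1 1)
  intro w hw w' hw'
  simp only [Set.mem_iUnion, Fin.exists_fin_two, couplingLower, couplingUpper, Set.mem_insert_iff,
    Set.mem_singleton_iff] at hw hw'
  rcases hw with (rfl | rfl | rfl | rfl) | (rfl | rfl | rfl | rfl) <;>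
    rcases hw' with (rfl | rfl | rfl | rfl) | (rfl | rfl | rfl | rfl) <;> linarith

theorem hasLHVModel_nsBox {m n : Fin 2 → ℝ} {c : Fin 2 → Fin 2 → ℝ}
    (hpos : ∀ a b x y, 0 ≤ nsBox m n c a b x y)
    (hchsh : ∀ (πx πy : Equiv.Perm (Fin 2)) (πa πb : Fin 2 → Equiv.Perm (Fin 2)) (swap : Bool),
      CHSHval (relabel πx πy πa πb swap (nsBox m n c)) ≤ 0) :
    HasLHVModel (nsBox m n c) := by
  obtain ⟨v, hv_lo, hv_up⟩ := exists_between_of_forall_le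
    (s := ⋃ x, couplingLower (m x) n (c x)) (t := ⋃ x, couplingUpper n (c x))
    ⟨0, Set.mem_iUnion_of_mem 0 (by simp [couplingLower])⟩
    ⟨n 0, Set.mem_iUnion_of_mem 0 (by simp [couplingUpper])⟩
    (couplingLower_le_couplingUpper hpos hchsh)
  choose s hs using fun x => exists_tripleCell_nonneg x (fun a b y => hpos a b x y)
    (fun w hw => hv_lo (Set.mem_iUnion_of_mem x hw))
    (fun w hw => hv_up (Set.mem_iUnion_of_mem x hw))
  exact HasLHVModel.of_common_marginal (x₀ := 0) (y₀ := 0)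
    (fun x a β => tripleCell (m x) n (c x) v (s x) a (β 0) (β 1))
    (fun β => ∑ a, tripleCell (m 0) n (c 0) v (s 0) a (β 0) (β 1))
    (fun x a β => hs x a _ _) (fun x β => sum_tripleCell_fst_eq ..)
    (fun a b x y => nsBox_eq_sum_tripleCell m n c v (s x) a b x y)
    (by simp [Fin.sum_univ_two, nsBox])

/-- In the CHSH scenario, every nonsignalling distribution whose CHSH value is `≤ 0` for
all symmetry-relabelings (inputs, outputs, parties) admits a local hidden variable model;
equivalently, zero direct causal influence `X→B` suffices. -/
theorem chsh_nonpositive_implies_lhv (p : Fin 2 → Fin 2 → Fin 2 → Fin 2 → ℝ)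
    (hpos : ∀ a b x y, 0 ≤ p a b x y)
    (hnorm : ∀ x y, ∑ a, ∑ b, p a b x y = 1)
    (hnsA : ∀ a x y y', ∑ b, p a b x y = ∑ b, p a b x y')
    (hnsB : ∀ b y x x', ∑ a, p a b x y = ∑ a, p a b x' y)
    (hchsh : ∀ (πx πy : Equiv.Perm (Fin 2)) (πa πb : Fin 2 → Equiv.Perm (Fin 2))
      (swap : Bool), CHSHval (relabel πx πy πa πb swap p) ≤ 0) :
    ∃ (k : ℕ) (q : Fin k → ℝ) (fA fB : Fin 2 → Fin k → Fin 2),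
      (∀ l, 0 ≤ q l) ∧ (∑ l, q l = 1) ∧
      ∀ a b x y, p a b x y =
        ∑ l, q l * (if a = fA x l then (1:ℝ) else 0) * (if b = fB y l then (1:ℝ) else 0) := by
  rw [eq_nsBox hnorm hnsA hnsB] at hpos hchsh ⊢
  exact hasLHVModel_nsBox hpos hchsh
end

section
/- For any real numbers θ₀^B with the choices θ₀^A = 0, θ₁^A = π, θ₂^A = π/2, θ₀^B = 0, θ₂^B = −π, and correlators E_{xy} = cos(θ_x^A)cos(θ_y^B) + 2√(ε(1−ε)) sin(θ_x^A)sin(θ_y^B), the quantity I_{A→B} = E₀₀ − E₀₂ − E₁₁ + E₁₂ − E₂₀ + E₂₁ equals 3 + cos(θ₁^B) + 2√(ε(1−ε)) sin(θ₁^B); consequently, for every ε ∈ (0,1) there exists θ₁^B such that I_{A→B} > 4. -/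
/-!
With the chosen angles, the six correlators collapse to `3 + cos θ + c sin θ` with
`c = 2√(ε(1−ε))`. At `θ = arctan c` the trigonometric part equals `√(1 + c²)`, which exceeds `1`
as soon as `c ≠ 0`, i.e. whenever the state is entangled.
-/

open Real

/-- Measurement angles for Alice: `θ₀^A = 0`, `θ₁^A = π`, `θ₂^A = π/2`. -/
noncomputable def thetaA : Fin 3 → ℝ := ![0, Real.pi, Real.pi / 2]

/-- Measurement angles for Bob: `θ₀^B = 0`, `θ₁^B = θ`, `θ₂^B = −π`. -/
noncomputable def thetaB (θ : ℝ) : Fin 3 → ℝ := ![0, θ, -Real.pi]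

/-- Correlators `E_{xy} = cos θ_x^A cos θ_y^B + 2√(ε(1−ε)) sin θ_x^A sin θ_y^B`. -/
noncomputable def corrE (ε θ : ℝ) (x y : Fin 3) : ℝ :=
  Real.cos (thetaA x) * Real.cos (thetaB θ y) +
    2 * Real.sqrt (ε * (1 - ε)) * Real.sin (thetaA x) * Real.sin (thetaB θ y)

/-- `I_{A→B} = E₀₀ − E₀₂ − E₁₁ + E₁₂ − E₂₀ + E₂₁`. -/
noncomputable def IAB (ε θ : ℝ) : ℝ :=
  corrE ε θ 0 0 - corrE ε θ 0 2 - corrE ε θ 1 1 + corrE ε θ 1 2 -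
    corrE ε θ 2 0 + corrE ε θ 2 1

theorem IAB_eq (ε θ : ℝ) :
    IAB ε θ = 3 + cos θ + 2 * √(ε * (1 - ε)) * sin θ := by
  simp only [IAB, corrE, thetaA, thetaB, Matrix.cons_val, cos_zero, sin_zero, cos_pi, sin_pi,
    cos_neg, sin_neg, cos_pi_div_two, sin_pi_div_two]
  ring

theorem cos_arctan_add_mul_sin_arctan (c : ℝ) :
    cos (arctan c) + c * sin (arctan c) = √(1 + c ^ 2) := by
  have hpos : 0 < √(1 + c ^ 2) := by positivity
  rw [cos_arctan, sin_arctan]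
  field_simp
  rw [sq_sqrt (by positivity)]

theorem one_lt_sqrt_one_add_sq {c : ℝ} (hc : c ≠ 0) : 1 < √(1 + c ^ 2) := by
  rw [lt_sqrt zero_le_one, one_pow]
  exact lt_add_of_pos_right 1 (by positivity)

theorem exists_one_lt_cos_add_mul_sin {c : ℝ} (hc : c ≠ 0) :
    ∃ θ : ℝ, 1 < cos θ + c * sin θ :=
  ⟨arctan c, (cos_arctan_add_mul_sin_arctan c).symm ▸ one_lt_sqrt_one_add_sq hc⟩

/-- With the chosen angles, `I_{A→B} = 3 + cos θ₁^B + 2√(ε(1−ε)) sin θ₁^B`; hence for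
every `ε ∈ (0,1)` some `θ₁^B` achieves `I_{A→B} > 4`. -/
theorem IAB_formula_and_violation :
    (∀ ε θ : ℝ, ε ∈ Set.Icc (0:ℝ) 1 →
        IAB ε θ = 3 + Real.cos θ + 2 * Real.sqrt (ε * (1 - ε)) * Real.sin θ) ∧
    (∀ ε : ℝ, 0 < ε → ε < 1 → ∃ θ : ℝ, 4 < IAB ε θ) := by
  refine ⟨fun ε θ _ => IAB_eq ε θ, fun ε hε hε1 => ?_⟩
  have hc : 2 * √(ε * (1 - ε)) ≠ 0 := by
    have : 0 < ε * (1 - ε) := mul_pos hε (sub_pos.mpr hε1)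
    positivity
  obtain ⟨θ, hθ⟩ := exists_one_lt_cos_add_mul_sin hc
  exact ⟨θ, by rw [IAB_eq]; linarith⟩
end
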